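/- arXiv:1902.05907 — 2 statements merged into one kernel-verified Lean document; each statement's English description precedes it below -/
import Mathlib

section
/- For every f ∈ S(0,∞) and every u > 0, the K-functional satisfies K_u(f) = inf_{t>0} [ t + u·μ(t; f) ], where μ(·; f) is the decreasing rearrangement of f. -/
open MeasureTheory Filter Set
open scoped ENNReal NNReal

/-- Lebesgue measure on `(0, ∞)`. -/
noncomputable def mLeb : Measure ℝ := volume.restrict (Set.Ioi (0:ℝ))

/-- The distribution function `d_f(s) = m {t ∈ (0,∞) : |f t| > s}`. -/
noncomputable def distFun (f : ℝ → ℝ) (s : ℝ) : ℝ≥0∞ := mLeb {t | s < |f t|}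

/-- `f ∈ S(0,∞)`: `f` is measurable and `d_f(s) < ∞` for some `s > 0`. -/
def MemS (f : ℝ → ℝ) : Prop := Measurable f ∧ ∃ s > (0:ℝ), distFun f s < ⊤

/-- `‖g‖₀ = m (supp g)`, the `L₀`-group-norm. -/
noncomputable def norm0 (g : ℝ → ℝ) : ℝ≥0∞ := mLeb (Function.support g)

/-- `‖h‖∞`, the essential supremum norm on `(0,∞)`. -/
noncomputable def normInf (h : ℝ → ℝ) : ℝ≥0∞ := eLpNorm h ⊤ mLeb

/-- `g ∈ L₀(0,∞)`: measurable with support of finite measure. -/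
def MemL0 (g : ℝ → ℝ) : Prop := Measurable g ∧ norm0 g < ⊤

/-- `h ∈ L∞(0,∞)`: measurable and essentially bounded. -/
def MemLinf (h : ℝ → ℝ) : Prop := Measurable h ∧ normInf h < ⊤

/-- The K-functional `K_u(f) = inf {‖g‖₀ + u‖h‖∞ : f = g + h, g ∈ L₀, h ∈ L∞}`. -/
noncomputable def Kfun (u : ℝ) (f : ℝ → ℝ) : ℝ≥0∞ :=
  ⨅ (g : ℝ → ℝ) (h : ℝ → ℝ) (_ : MemL0 g) (_ : MemLinf h) (_ : f = g + h),
    norm0 g + ENNReal.ofReal u * normInf h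

/-- The decreasing rearrangement `μ(t; f) = inf {s ≥ 0 : d_f(s) ≤ t}`. -/
noncomputable def rearr (f : ℝ → ℝ) (t : ℝ) : ℝ :=
  sInf {s : ℝ | 0 ≤ s ∧ distFun f s ≤ ENNReal.ofReal t}

/-- The Δ-norm `‖f‖_S = inf_{s>0} [s + d_f(s)]`. -/
noncomputable def normS (f : ℝ → ℝ) : ℝ≥0∞ :=
  ⨅ (s : ℝ) (_ : 0 < s), ENNReal.ofReal s + distFun f s

/-!
For `t > 0`, splitting `f` at the level `μ(t; f)` into `f·χ{|f| > μ(t)}` and `f·χ{|f| ≤ μ(t)}`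
gives `K_u(f) ≤ t + u·μ(t; f)`, because `d_f` is right-continuous and hence
`d_f(μ(t; f)) ≤ t`. Conversely, if `f = g + h` then `|f| = |h| ≤ ‖h‖∞` a.e. off `supp g`, so
`d_f(‖h‖∞) ≤ ‖g‖₀` and `μ(‖g‖₀ + ε; f) ≤ ‖h‖∞` for every `ε > 0`.
-/

open Topology

section LevelSets

variable {α : Type*} [MeasurableSpace α] {μ : Measure α}

lemma measure_lt_le_of_forall_gt {g : α → ℝ} {a : ℝ} {c : ℝ≥0∞}
    (h : ∀ s, a < s → μ {x | s < g x} ≤ c) : μ {x | a < g x} ≤ c := by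
  obtain ⟨u, hu_anti, hu_gt, hu_lim⟩ := exists_seq_strictAnti_tendsto a
  have hunion : {x | a < g x} = ⋃ n, {x | u n < g x} := by
    ext x
    simp only [mem_iUnion]
    exact ⟨fun hx => (hu_lim.eventually (gt_mem_nhds hx)).exists,
      fun ⟨n, hn⟩ => (hu_gt n).trans hn⟩
  have hmono : Monotone fun n => {x | u n < g x} :=
    fun m n hmn x hx => (hu_anti.antitone hmn).trans_lt hx
  rw [hunion, hmono.measure_iUnion]
  exact iSup_le fun n => h _ (hu_gt n)

lemma tendsto_measure_lt_atTop_zero {g : α → ℝ} (hg : AEMeasurable g μ)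
    (hfin : ∃ s, μ {x | s < g x} ≠ ∞) :
    Tendsto (fun s => μ {x | s < g x}) atTop (𝓝 0) := by
  have hempty : ⋂ s : ℝ, {x | s < g x} = ∅ :=
    eq_empty_of_forall_notMem fun x hx => lt_irrefl (g x) (mem_iInter.1 hx (g x))
  have h := tendsto_measure_iInter_atTop (μ := μ)
    (fun s => nullMeasurableSet_lt aemeasurable_const hg)
    (fun s t hst x hx => hst.trans_lt hx) hfin
  rwa [hempty, measure_empty] at h

lemma ae_abs_le_toReal_eLpNorm_top {h : α → ℝ} (hh : eLpNorm h ⊤ μ ≠ ⊤) :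
    ∀ᵐ x ∂μ, |h x| ≤ (eLpNorm h ⊤ μ).toReal := by
  rw [eLpNorm_exponent_top] at hh ⊢
  filter_upwards [ae_le_eLpNormEssSup (f := h) (μ := μ)] with x hx
  simpa using ENNReal.toReal_mono hh hx

end LevelSets

section Rearrangement

variable {f : ℝ → ℝ} {s t : ℝ}

lemma distFun_antitone (f : ℝ → ℝ) : Antitone (distFun f) :=
  fun _ _ hst => measure_mono fun _ hx => hst.trans_lt hx

lemma tendsto_distFun_atTop (hf : MemS f) : Tendsto (distFun f) atTop (𝓝 0) :=
  let ⟨s, _, hs⟩ := hf.2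
  tendsto_measure_lt_atTop_zero hf.1.abs.aemeasurable ⟨s, hs.ne⟩

lemma rearr_nonneg (f : ℝ → ℝ) (t : ℝ) : 0 ≤ rearr f t :=
  Real.sInf_nonneg fun _ hs => hs.1

lemma rearr_le_of_distFun_le (hs : 0 ≤ s) (hd : distFun f s ≤ ENNReal.ofReal t) :
    rearr f t ≤ s :=
  csInf_le ⟨0, fun _ hr => hr.1⟩ ⟨hs, hd⟩

lemma distFun_rearr_le (hf : MemS f) (ht : 0 < t) :
    distFun f (rearr f t) ≤ ENNReal.ofReal t := by
  have hne : {s | 0 ≤ s ∧ distFun f s ≤ ENNReal.ofReal t}.Nonempty := by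
    obtain ⟨s, hs, hs0⟩ := (((tendsto_distFun_atTop hf).eventually
      (gt_mem_nhds (ENNReal.ofReal_pos.2 ht))).and (eventually_ge_atTop 0)).exists
    exact ⟨s, hs0, hs.le⟩
  refine measure_lt_le_of_forall_gt (g := fun x => |f x|) fun s hs => ?_
  obtain ⟨r, hr, hrs⟩ := (csInf_lt_iff ⟨0, fun _ hr => hr.1⟩ hne).1 hs
  exact (distFun_antitone f hrs.le).trans hr.2

end Rearrangement

section KFunctional

variable {f g h : ℝ → ℝ} {u : ℝ}

lemma Kfun_le (hg : MemL0 g) (hh : MemLinf h) (hfgh : f = g + h) :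
    Kfun u f ≤ norm0 g + ENNReal.ofReal u * normInf h :=
  iInf_le_of_le g <| iInf_le_of_le h <| iInf_le_of_le hg <| iInf_le_of_le hh <|
    iInf_le _ hfgh

lemma Kfun_le_distFun_add {a : ℝ} (hf : Measurable f) (ha : 0 ≤ a) (hd : distFun f a ≠ ⊤) :
    Kfun u f ≤ distFun f a + ENNReal.ofReal u * ENNReal.ofReal a := by
  set S := {x | a < |f x|}
  have hS : MeasurableSet S := measurableSet_lt measurable_const hf.abs
  have hbound : ∀ x, ‖Sᶜ.indicator f x‖ ≤ a := by
    intro x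
    by_cases hx : x ∈ Sᶜ
    · rw [indicator_of_mem hx, Real.norm_eq_abs]
      exact not_lt.1 hx
    · simpa [hx] using ha
  have hnorm0 : norm0 (S.indicator f) ≤ distFun f a := measure_mono support_indicator_subset
  have hnormInf : normInf (Sᶜ.indicator f) ≤ ENNReal.ofReal a := by
    rw [normInf, eLpNorm_exponent_top]
    exact eLpNormEssSup_le_of_ae_bound (ae_of_all _ hbound)
  calc Kfun u f ≤ norm0 (S.indicator f) + ENNReal.ofReal u * normInf (Sᶜ.indicator f) :=
        Kfun_le ⟨hf.indicator hS, hnorm0.trans_lt hd.lt_top⟩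
          ⟨hf.indicator hS.compl, hnormInf.trans_lt ENNReal.ofReal_lt_top⟩
          (indicator_self_add_compl S f).symm
    _ ≤ distFun f a + ENNReal.ofReal u * ENNReal.ofReal a := by gcongr

lemma distFun_toReal_normInf_le (hfgh : f = g + h) (hh : normInf h ≠ ⊤) :
    distFun f (normInf h).toReal ≤ norm0 g := by
  refine measure_mono_ae ?_
  filter_upwards [ae_abs_le_toReal_eLpNorm_top hh] with x hhx hfx hgx
  change (normInf h).toReal < |f x| at hfx
  rw [hfgh, Pi.add_apply, hgx, zero_add] at hfx
  exact hhx.not_gt hfx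

lemma iInf_ofReal_add_mul_rearr_le (hu : 0 ≤ u) (hfgh : f = g + h) (hg : norm0 g ≠ ⊤)
    (hh : normInf h ≠ ⊤) :
    ⨅ (t : ℝ) (_ : 0 < t), ENNReal.ofReal (t + u * rearr f t) ≤
      norm0 g + ENNReal.ofReal u * normInf h := by
  -- `ε` keeps `t` positive when `g = 0` a.e.
  refine ENNReal.le_of_forall_pos_le_add fun ε hε _ => ?_
  set a := (normInf h).toReal
  set t := (norm0 g).toReal + ε with ht
  have hgt : norm0 g ≤ ENNReal.ofReal t := by
    rw [ht, ENNReal.ofReal_add ENNReal.toReal_nonneg ε.coe_nonneg, ENNReal.ofReal_toReal hg]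
    exact le_self_add
  have hrearr : rearr f t ≤ a :=
    rearr_le_of_distFun_le ENNReal.toReal_nonneg ((distFun_toReal_normInf_le hfgh hh).trans hgt)
  calc ⨅ (t : ℝ) (_ : 0 < t), ENNReal.ofReal (t + u * rearr f t)
      ≤ ENNReal.ofReal (t + u * rearr f t) := iInf₂_le t (by positivity)
    _ ≤ ENNReal.ofReal (t + u * a) := by gcongr
    _ = norm0 g + ENNReal.ofReal u * normInf h + ε := by
      rw [ENNReal.ofReal_add (by positivity) (by positivity), ht,
        ENNReal.ofReal_add ENNReal.toReal_nonneg ε.coe_nonneg, ENNReal.ofReal_mul hu,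
        ENNReal.ofReal_toReal hg, ENNReal.ofReal_toReal hh, ENNReal.ofReal_coe_nnreal]
      ring

end KFunctional

/-- `K_u(f) = inf_{t>0} [t + u·μ(t; f)]` for every `f ∈ S(0,∞)`, `u > 0`. -/
theorem stmt2 (f : ℝ → ℝ) (hf : MemS f) (u : ℝ) (hu : 0 < u) :
    Kfun u f = ⨅ (t : ℝ) (_ : 0 < t), ENNReal.ofReal (t + u * rearr f t) := by
  refine le_antisymm (le_iInf₂ fun t ht => ?_) ?_
  · have hd := distFun_rearr_le hf ht
    calc Kfun u f
        ≤ distFun f (rearr f t) + ENNReal.ofReal u * ENNReal.ofReal (rearr f t) :=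
          Kfun_le_distFun_add hf.1 (rearr_nonneg f t)
            (ne_top_of_le_ne_top ENNReal.ofReal_ne_top hd)
      _ ≤ ENNReal.ofReal t + ENNReal.ofReal u * ENNReal.ofReal (rearr f t) := by gcongr
      _ = ENNReal.ofReal (t + u * rearr f t) := by
          rw [← ENNReal.ofReal_mul hu.le,
            ← ENNReal.ofReal_add ht.le (mul_nonneg hu.le (rearr_nonneg f t))]
  · exact le_iInf fun g => le_iInf fun h => le_iInf fun hg => le_iInf fun hh =>
      le_iInf fun hfgh => iInf_ofReal_add_mul_rearr_le hu.le hfgh hg.2.ne hh.2.ne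
end

section
/- Let T be an additive map sending measurable functions on (0,∞) to measurable functions, with constants M₀, M₁ > 0 such that ‖Tf‖₀ ≤ M₀‖f‖₀ for every f ∈ L₀(0,∞) and ‖Tf‖∞ ≤ M₁‖f‖∞ for every f ∈ L∞(0,∞). Then there exists a constant C > 0, depending only on M₀ and M₁, such that ‖Tf‖_S ≤ C‖f‖_S for every f ∈ S(0,∞), where ‖f‖_S = inf_{s>0}[s + d_f(s)]. In particular, T maps S(0,∞) boundedly into itself. -/
open MeasureTheory Filter Set
open scoped ENNReal NNReal

/-!
Split `f = g + h` with `g = f · 1_{|f| > s}` and `h` the truncated rest: `‖g‖₀ ≤ d_f(s)` and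
`‖h‖∞ ≤ s`. Then `Tf = Tg + Th` with `|Th| ≤ M₁ s` a.e., so up to a null set
`{|Tf| > M₁ s} ⊆ supp Tg`, whence `d_{Tf}(M₁ s) ≤ M₀ d_f(s)`. Testing `‖Tf‖_S` at `M₁ s` gives
`‖Tf‖_S ≤ M₁ s + M₀ d_f(s) ≤ max M₀ M₁ · (s + d_f(s))`, and taking the infimum over `s` finishes.
-/

lemma distFun_eq_zero_of_normInf_le {h : ℝ → ℝ} {c : ℝ} (hc : 0 ≤ c)
    (hh : normInf h ≤ ENNReal.ofReal c) : distFun h c = 0 := by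
  rw [normInf, eLpNorm_exponent_top] at hh
  refine measure_eq_zero_iff_ae_notMem.mpr ?_
  filter_upwards [ae_le_eLpNormEssSup (f := h) (μ := mLeb)] with t ht
  have : ENNReal.ofReal |h t| ≤ ENNReal.ofReal c := by
    rw [← Real.norm_eq_abs, ofReal_norm]
    exact ht.trans hh
  exact not_lt.mpr ((ENNReal.ofReal_le_ofReal_iff hc).mp this)

lemma distFun_add_le (g h : ℝ → ℝ) (c : ℝ) : distFun (g + h) c ≤ norm0 g + distFun h c := by
  refine (measure_mono fun t (ht : c < |g t + h t|) => ?_).trans (measure_union_le _ _)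
  by_cases hg : g t = 0
  · right
    simpa [hg] using ht
  · exact Or.inl hg

lemma distFun_add_le_norm0 (g : ℝ → ℝ) {h : ℝ → ℝ} {c : ℝ} (hc : 0 ≤ c)
    (hh : normInf h ≤ ENNReal.ofReal c) : distFun (g + h) c ≤ norm0 g := by
  simpa [distFun_eq_zero_of_normInf_le hc hh] using distFun_add_le g h c

lemma norm0_indicator_le_distFun (f : ℝ → ℝ) (s : ℝ) :
    norm0 ({t | s < |f t|}.indicator f) ≤ distFun f s :=
  measure_mono support_indicator_subset

lemma abs_sub_indicator_le (f : ℝ → ℝ) {s : ℝ} (hs : 0 ≤ s) (t : ℝ) :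
    |(f - {t | s < |f t|}.indicator f) t| ≤ s := by
  by_cases ht : s < |f t|
  · simp [indicator_of_mem (show t ∈ {t | s < |f t|} from ht), hs]
  · simpa [indicator_of_notMem (show t ∉ {t | s < |f t|} from ht)] using ht

lemma normInf_sub_indicator_le (f : ℝ → ℝ) {s : ℝ} (hs : 0 ≤ s) :
    normInf (f - {t | s < |f t|}.indicator f) ≤ ENNReal.ofReal s := by
  rw [normInf, eLpNorm_exponent_top]
  exact eLpNormEssSup_le_of_ae_bound (Eventually.of_forall fun t =>
    (Real.norm_eq_abs _).trans_le (abs_sub_indicator_le f hs t))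

lemma normS_le_add_distFun (f : ℝ → ℝ) {s : ℝ} (hs : 0 < s) :
    normS f ≤ ENNReal.ofReal s + distFun f s :=
  iInf₂_le s hs

lemma normS_le_mul_of_forall {f g : ℝ → ℝ} {C : ℝ} (hC : 0 < C)
    (h : ∀ s > 0, distFun f s < ⊤ →
      normS g ≤ ENNReal.ofReal C * (ENNReal.ofReal s + distFun f s)) :
    normS g ≤ ENNReal.ofReal C * normS f := by
  have hC₀ : ENNReal.ofReal C ≠ 0 := (ENNReal.ofReal_pos.mpr hC).ne'
  conv_rhs => rw [normS, ENNReal.mul_iInf_of_ne hC₀ ENNReal.ofReal_ne_top]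
  refine le_iInf fun s => ?_
  rw [ENNReal.mul_iInf_of_ne hC₀ ENNReal.ofReal_ne_top]
  refine le_iInf fun hs => ?_
  rcases (le_top : distFun f s ≤ ⊤).lt_or_eq with hfin | hinf
  · exact h s hs hfin
  · simp [hinf, ENNReal.mul_top hC₀]

theorem distFun_apply_le {T : (ℝ → ℝ) → (ℝ → ℝ)} {M₀ M₁ : ℝ}
    (hadd : ∀ f g : ℝ → ℝ, T (f + g) = T f + T g)
    (hT0 : ∀ f : ℝ → ℝ, MemL0 f → norm0 (T f) ≤ ENNReal.ofReal M₀ * norm0 f)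
    (hTinf : ∀ f : ℝ → ℝ, MemLinf f → normInf (T f) ≤ ENNReal.ofReal M₁ * normInf f)
    (hM₁ : 0 ≤ M₁) {f : ℝ → ℝ} (hf : Measurable f) {s : ℝ} (hs : 0 ≤ s)
    (hfin : distFun f s < ⊤) :
    distFun (T f) (M₁ * s) ≤ ENNReal.ofReal M₀ * distFun f s := by
  set g := {t | s < |f t|}.indicator f
  have hg_meas : Measurable g := hf.indicator (measurableSet_lt measurable_const hf.abs)
  have hg : MemL0 g := ⟨hg_meas, (norm0_indicator_le_distFun f s).trans_lt hfin⟩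
  have hh : MemLinf (f - g) :=
    ⟨hf.sub hg_meas, (normInf_sub_indicator_le f hs).trans_lt ENNReal.ofReal_lt_top⟩
  have hTh : normInf (T (f - g)) ≤ ENNReal.ofReal (M₁ * s) := by
    rw [ENNReal.ofReal_mul hM₁]
    exact (hTinf _ hh).trans (by gcongr; exact normInf_sub_indicator_le f hs)
  calc distFun (T f) (M₁ * s) = distFun (T g + T (f - g)) (M₁ * s) := by
        rw [← hadd, add_sub_cancel]
    _ ≤ norm0 (T g) := distFun_add_le_norm0 _ (mul_nonneg hM₁ hs) hTh
    _ ≤ ENNReal.ofReal M₀ * norm0 g := hT0 g hg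
    _ ≤ ENNReal.ofReal M₀ * distFun f s := by gcongr; exact norm0_indicator_le_distFun f s

/-- An additive map bounded on the pair `(L₀, L∞)` with constants
`M₀, M₁` is bounded on `(S(0,∞), ‖·‖_S)`, with a constant depending only on `M₀, M₁`. -/
theorem stmt7 (M₀ M₁ : ℝ) (hM₀ : 0 < M₀) (hM₁ : 0 < M₁) :
    ∃ C > (0:ℝ), ∀ T : (ℝ → ℝ) → (ℝ → ℝ),
      (∀ f g : ℝ → ℝ, T (f + g) = T f + T g) →
      (∀ f : ℝ → ℝ, Measurable f → Measurable (T f)) →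
      (∀ f : ℝ → ℝ, MemL0 f → norm0 (T f) ≤ ENNReal.ofReal M₀ * norm0 f) →
      (∀ f : ℝ → ℝ, MemLinf f → normInf (T f) ≤ ENNReal.ofReal M₁ * normInf f) →
      ∀ f : ℝ → ℝ, MemS f → normS (T f) ≤ ENNReal.ofReal C * normS f := by
  have hC : 0 < max M₀ M₁ := lt_max_of_lt_left hM₀
  refine ⟨max M₀ M₁, hC, fun T hadd _ hT0 hTinf f hf => ?_⟩
  refine normS_le_mul_of_forall hC fun s hs hfin => ?_
  calc normS (T f) ≤ ENNReal.ofReal (M₁ * s) + distFun (T f) (M₁ * s) :=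
        normS_le_add_distFun _ (mul_pos hM₁ hs)
    _ ≤ ENNReal.ofReal M₁ * ENNReal.ofReal s + ENNReal.ofReal M₀ * distFun f s := by
        rw [ENNReal.ofReal_mul hM₁.le]
        gcongr
        exact distFun_apply_le hadd hT0 hTinf hM₁.le hf.1 hs.le hfin
    _ ≤ ENNReal.ofReal (max M₀ M₁) * (ENNReal.ofReal s + distFun f s) := by
        rw [mul_add]
        gcongr
        exacts [le_max_right _ _, le_max_left _ _]
end
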